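/- arXiv:1602.07273 — 3 statements merged into one kernel-verified Lean document; each statement's English description precedes it below -/
import Mathlib

section
/- Downshift feasibility: if F is monotone, γ-contractive in sup-norm with fixed point Q*, and shift-equivariant (F^M(Q + β) = F^M Q + γ^M β for constants β), then for any Q the downshifted function Q̃ = Q − ((1+γ^M)/(1−γ^M))·‖Q* − Q‖_∞ satisfies the iterated inequality Q̃ ≤ F^M Q̃ pointwise. -/
theorem stmt9 {S : Type*} [Nonempty S] (γ : ℝ) (hγ0 : 0 ≤ γ) (hγ1 : γ < 1)
    (M : ℕ) (hM : 1 ≤ M)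
    (F : (S → ℝ) → (S → ℝ)) (Qstar : S → ℝ)
    (hmono : ∀ Q₁ Q₂ : S → ℝ, (∀ s, Q₁ s ≤ Q₂ s) → ∀ s, F Q₁ s ≤ F Q₂ s)
    (hcontr : ∀ (Q₁ Q₂ : S → ℝ) (C : ℝ), (∀ s, |Q₁ s - Q₂ s| ≤ C) →
      ∀ s, |F Q₁ s - F Q₂ s| ≤ γ * C)
    (hfix : F Qstar = Qstar)
    (hshift : ∀ (Q' : S → ℝ) (β : ℝ) (s : S),
      F^[M] (fun t => Q' t + β) s = F^[M] Q' s + γ ^ M * β)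
    (Q : S → ℝ) (hbdd : BddAbove (Set.range fun s => |Qstar s - Q s|)) :
    ∀ s, (Q s - ((1 + γ ^ M) / (1 - γ ^ M)) * (⨆ s', |Qstar s' - Q s'|)) ≤
      F^[M] (fun t => Q t - ((1 + γ ^ M) / (1 - γ ^ M)) * (⨆ s', |Qstar s' - Q s'|)) s := by
  intro s
  set ε := ⨆ s', |Qstar s' - Q s'| with hε
  have hle : ∀ t, |Qstar t - Q t| ≤ ε := fun t => le_ciSup hbdd t
  have hεnn : 0 ≤ ε := (abs_nonneg _).trans (hle (Classical.arbitrary S))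
  have hγM : γ ^ M < 1 := pow_lt_one₀ hγ0 hγ1 (by omega)
  have hpos : 0 < 1 - γ ^ M := by linarith
  set c := (1 + γ ^ M) / (1 - γ ^ M) with hc
  have hcval : c * (1 - γ ^ M) = 1 + γ ^ M := div_mul_cancel₀ _ hpos.ne'
  -- iterated contraction
  have hiter : ∀ n, ∀ t, |F^[n] Qstar t - F^[n] Q t| ≤ γ ^ n * ε := by
    intro n
    induction n with
    | zero => simpa using hle
    | succ n ih =>
      intro t
      rw [Function.iterate_succ_apply', Function.iterate_succ_apply']
      calc |F (F^[n] Qstar) t - F (F^[n] Q) t| ≤ γ * (γ ^ n * ε) :=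
            hcontr _ _ _ ih t
        _ = γ ^ (n + 1) * ε := by ring
  have hfixM : F^[M] Qstar = Qstar := Function.iterate_fixed hfix M
  have h1 : |Qstar s - F^[M] Q s| ≤ γ ^ M * ε := by
    have := hiter M s; rwa [hfixM] at this
  have h2 : |Qstar s - Q s| ≤ ε := hle s
  have hsh := hshift Q (-(c * ε)) s
  have hfun : (fun t => Q t - c * ε) = (fun t => Q t + (-(c * ε))) := by
    funext t; ring
  rw [hfun, hsh]
  have habs1 := abs_le.mp h1
  have habs2 := abs_le.mp h2
  have hγMnn : 0 ≤ γ ^ M := pow_nonneg hγ0 M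
  nlinarith [habs1.1, habs1.2, habs2.1, habs2.2, mul_nonneg hγMnn hεnn]
end

section
/- Infinity-norm fitting bound: if Q̂* is the maximizer of ∫ Q dc over functions in a shift-closed class 𝒞 satisfying Q ≤ F^M Q pointwise (c a probability measure), then ‖Q* − Q̂*‖_{1,c} ≤ (2/(1−γ^M))·inf_{Q ∈ 𝒞} ‖Q* − Q‖_∞. -/
/-!
Take any `Q ∈ 𝒞` at sup-distance `ε` from `Q*` and put `κ = γ ^ M`. Since `F^[M]` is a
`κ`-contraction fixing `Q*`, `Q - F^[M] Q ≤ (1 + κ) ε`, and shift-equivariance turns this into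
feasibility of `Q - β` for `β = (1 + κ) ε / (1 - κ)`. Maximality of `Q̂` then gives
`∫ (Q* - Q̂) ≤ ∫ (Q* - Q) + β ≤ ε + β = 2 ε / (1 - κ)`.
-/

open MeasureTheory

section

variable {S : Type*}

theorem abs_iterate_sub_le {F : (S → ℝ) → (S → ℝ)} {γ : ℝ}
    (hcontr : ∀ (Q₁ Q₂ : S → ℝ) (C : ℝ), (∀ s, |Q₁ s - Q₂ s| ≤ C) →
      ∀ s, |F Q₁ s - F Q₂ s| ≤ γ * C)
    (n : ℕ) {Q₁ Q₂ : S → ℝ} {C : ℝ} (h : ∀ s, |Q₁ s - Q₂ s| ≤ C) (s : S) :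
    |F^[n] Q₁ s - F^[n] Q₂ s| ≤ γ ^ n * C := by
  induction n generalizing s with
  | zero => simpa using h s
  | succ n ih =>
    rw [Function.iterate_succ_apply', Function.iterate_succ_apply', pow_succ', mul_assoc]
    exact hcontr _ _ _ ih s

theorem le_apply_add_neg_of_abs_sub_le {G : (S → ℝ) → (S → ℝ)} {κ ε : ℝ} {Qstar Q : S → ℝ}
    (hκ : κ < 1)
    (hshift : ∀ (Q' : S → ℝ) (β : ℝ) (s : S), G (fun t => Q' t + β) s = G Q' s + κ * β)
    (hQ : ∀ s, |Qstar s - Q s| ≤ ε) (hGQ : ∀ s, |G Q s - Qstar s| ≤ κ * ε) (s : S) :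
    Q s + -((1 + κ) * ε / (1 - κ)) ≤ G (fun t => Q t + -((1 + κ) * ε / (1 - κ))) s := by
  have hβ : (1 - κ) * ((1 + κ) * ε / (1 - κ)) = (1 + κ) * ε := by
    field_simp [(sub_pos.mpr hκ).ne']
  rw [hshift]
  linarith [(abs_le.mp (hQ s)).1, (abs_le.mp (hGQ s)).1]

variable [MeasurableSpace S] {c : Measure S} [IsProbabilityMeasure c]

theorem integral_sub_le_of_abs_sub_le {f g : S → ℝ} {ε : ℝ}
    (hf : Integrable f c) (hg : Integrable g c) (h : ∀ s, |f s - g s| ≤ ε) :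
    ∫ s, (f s - g s) ∂c ≤ ε := by
  calc ∫ s, (f s - g s) ∂c ≤ ∫ _, ε ∂c :=
        integral_mono (hf.sub hg) (integrable_const ε) fun s => (le_abs_self _).trans (h s)
    _ = ε := by simp

end

theorem stmt10_general {S : Type*} [MeasurableSpace S]
    (c : Measure S) [IsProbabilityMeasure c]
    (γ : ℝ) (hγ0 : 0 ≤ γ) (hγ1 : γ < 1) (M : ℕ) (hM : 1 ≤ M)
    (F : (S → ℝ) → (S → ℝ)) (Qstar : S → ℝ)
    (hcontr : ∀ (Q₁ Q₂ : S → ℝ) (C : ℝ), (∀ s, |Q₁ s - Q₂ s| ≤ C) →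
      ∀ s, |F Q₁ s - F Q₂ s| ≤ γ * C)
    (hfix : F Qstar = Qstar)
    (hshift : ∀ (Q' : S → ℝ) (β : ℝ) (s : S),
      F^[M] (fun t => Q' t + β) s = F^[M] Q' s + γ ^ M * β)
    (𝒞 : Set (S → ℝ))
    (hclosed : ∀ Q ∈ 𝒞, ∀ β : ℝ, (fun s => Q s + β) ∈ 𝒞)
    (hintQ : ∀ Q ∈ 𝒞, Integrable Q c) (hintQs : Integrable Qstar c)
    (hbdd : ∀ Q ∈ 𝒞, BddAbove (Set.range fun s => |Qstar s - Q s|))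
    (Qhat : S → ℝ) (hQhat𝒞 : Qhat ∈ 𝒞)
    (hmax : ∀ Q ∈ 𝒞, (∀ s, Q s ≤ F^[M] Q s) → ∫ s, Q s ∂c ≤ ∫ s, Qhat s ∂c) :
    ∫ s, (Qstar s - Qhat s) ∂c ≤
      (2 / (1 - γ ^ M)) * ⨅ Q : 𝒞, ⨆ s, |Qstar s - Q.1 s| := by
  set κ := γ ^ M
  have hκ : κ < 1 := pow_lt_one₀ hγ0 hγ1 (by omega)
  have : Nonempty 𝒞 := ⟨⟨Qhat, hQhat𝒞⟩⟩
  rw [Real.mul_iInf_of_nonneg (div_nonneg zero_le_two (sub_pos.mpr hκ).le)]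
  refine le_ciInf fun ⟨Q, hQ⟩ => ?_
  set ε := ⨆ s, |Qstar s - Q s|
  set β := (1 + κ) * ε / (1 - κ)
  have hQε : ∀ s, |Qstar s - Q s| ≤ ε := le_ciSup (hbdd Q hQ)
  have hFQ : ∀ s, |F^[M] Q s - Qstar s| ≤ κ * ε := by
    simpa [Function.iterate_fixed hfix M] using
      abs_iterate_sub_le hcontr M (Q₂ := Qstar) fun s => abs_sub_comm (Qstar s) (Q s) ▸ hQε s
  have hfeas := hmax _ (hclosed Q hQ (-β)) (le_apply_add_neg_of_abs_sub_le hκ hshift hQε hFQ)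
  have hshifted : ∫ s, (Q s + -β) ∂c = ∫ s, Q s ∂c - β := by
    simp [integral_add (hintQ Q hQ) (integrable_const _), sub_eq_add_neg]
  have hQclose := integral_sub_le_of_abs_sub_le hintQs (hintQ Q hQ) hQε
  have hβ : ε + β = 2 / (1 - κ) * ε := by
    simp only [β]
    field_simp [(sub_pos.mpr hκ).ne']
    ring
  rw [integral_sub hintQs (hintQ Qhat hQhat𝒞)]
  rw [integral_sub hintQs (hintQ Q hQ)] at hQclose
  linarith

theorem stmt10 {S : Type*} [MeasurableSpace S] [Nonempty S]
    (c : Measure S) [IsProbabilityMeasure c]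
    (γ : ℝ) (hγ0 : 0 ≤ γ) (hγ1 : γ < 1) (M : ℕ) (hM : 1 ≤ M)
    (F : (S → ℝ) → (S → ℝ)) (Qstar : S → ℝ)
    (hmono : ∀ Q₁ Q₂ : S → ℝ, (∀ s, Q₁ s ≤ Q₂ s) → ∀ s, F Q₁ s ≤ F Q₂ s)
    (hcontr : ∀ (Q₁ Q₂ : S → ℝ) (C : ℝ), (∀ s, |Q₁ s - Q₂ s| ≤ C) →
      ∀ s, |F Q₁ s - F Q₂ s| ≤ γ * C)
    (hfix : F Qstar = Qstar)
    (hshift : ∀ (Q' : S → ℝ) (β : ℝ) (s : S),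
      F^[M] (fun t => Q' t + β) s = F^[M] Q' s + γ ^ M * β)
    (hunder : ∀ Q : S → ℝ, (∀ s, Q s ≤ F^[M] Q s) → ∀ s, Q s ≤ Qstar s)
    (𝒞 : Set (S → ℝ)) (hne : 𝒞.Nonempty)
    (hclosed : ∀ Q ∈ 𝒞, ∀ β : ℝ, (fun s => Q s + β) ∈ 𝒞)
    (hintQ : ∀ Q ∈ 𝒞, Integrable Q c) (hintQs : Integrable Qstar c)
    (hbdd : ∀ Q ∈ 𝒞, BddAbove (Set.range fun s => |Qstar s - Q s|))
    (Qhat : S → ℝ) (hQhat𝒞 : Qhat ∈ 𝒞) (hQhatfeas : ∀ s, Qhat s ≤ F^[M] Qhat s)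
    (hmax : ∀ Q ∈ 𝒞, (∀ s, Q s ≤ F^[M] Q s) → ∫ s, Q s ∂c ≤ ∫ s, Qhat s ∂c) :
    ∫ s, (Qstar s - Qhat s) ∂c ≤
      (2 / (1 - γ ^ M)) * ⨅ Q : 𝒞, ⨆ s, |Qstar s - Q.1 s| :=
  stmt10_general c γ hγ0 hγ1 M hM F Qstar hcontr hfix hshift 𝒞 hclosed hintQ hintQs hbdd Qhat hQhat𝒞
    hmax
end

section
/- Lyapunov downshift feasibility: under the comparison property |T^M V₁ − T^M V₂| ≤ γ^M H^M|V₁−V₂|, homogeneity of H^M over positive constants, and linearity of T^M under subtraction of a multiple of V⁺ in the sense T^M(V − cV⁺) ≥ T^M V − c γ^M H^M V⁺ pointwise, if V⁺ is a Lyapunov function (γ^M H^M V⁺ ≤ β^M V⁺ pointwise, β ∈ (0,1)), then Ṽ = V − ε·(2/(1−β^M) − 1)·V⁺ satisfies Ṽ ≤ T^M Ṽ pointwise, where ε = sup_x |V*(x)−V(x)|/V⁺(x). -/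
theorem stmt18 {X : Type*} [Nonempty X] (γ β : ℝ) (hγ0 : 0 ≤ γ) (hγ1 : γ < 1)
    (hβ0 : 0 < β) (hβ1 : β < 1) (M : ℕ) (hM : 1 ≤ M)
    (T H : (X → ℝ) → (X → ℝ)) (Vs : X → ℝ)
    (hfix : T Vs = Vs)
    (hmono : ∀ W₁ W₂ : X → ℝ, (∀ x, W₁ x ≤ W₂ x) → ∀ x, H W₁ x ≤ H W₂ x)
    (hhom : ∀ (cc : ℝ), 0 < cc → ∀ W : X → ℝ,
      H (fun x => cc * W x) = fun x => cc * H W x)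
    (hcomp : ∀ (V₁ V₂ : X → ℝ) (x : X),
      |T^[M] V₁ x - T^[M] V₂ x| ≤ γ ^ M * (H^[M] (fun y => |V₁ y - V₂ y|)) x)
    (Vp : X → ℝ) (hVp : ∀ x, 0 < Vp x)
    (hLyap : ∀ x, γ ^ M * (H^[M] Vp) x ≤ β ^ M * Vp x)
    (hsub : ∀ (V' : X → ℝ) (cc : ℝ), 0 ≤ cc → ∀ x,
      T^[M] V' x - cc * γ ^ M * (H^[M] Vp) x ≤ T^[M] (fun y => V' y - cc * Vp y) x)
    (V : X → ℝ) (hbdd : BddAbove (Set.range fun x => |Vs x - V x| / Vp x)) :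
    ∀ x, V x - (⨆ y, |Vs y - V y| / Vp y) * ((1 + β ^ M) / (1 - β ^ M)) * Vp x ≤
      T^[M] (fun z =>
        V z - (⨆ y, |Vs y - V y| / Vp y) * ((1 + β ^ M) / (1 - β ^ M)) * Vp z) x := by
  intro x
  set ε := ⨆ y, |Vs y - V y| / Vp y with hεdef
  have hβM1 : β ^ M < 1 := pow_lt_one₀ hβ0.le hβ1 (by omega)
  have hβMpos : 0 < β ^ M := pow_pos hβ0 M
  have h1βM : 0 < 1 - β ^ M := by linarith
  have hγM : 0 ≤ γ ^ M := pow_nonneg hγ0 M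
  have hfixM : T^[M] Vs = Vs := Function.iterate_fixed hfix M
  have hεub : ∀ y, |Vs y - V y| ≤ ε * Vp y := by
    intro y
    have h := le_ciSup hbdd y
    rwa [div_le_iff₀ (hVp y)] at h
  have hε0 : 0 ≤ ε := le_trans (div_nonneg (abs_nonneg _) (hVp _).le) (le_ciSup hbdd (Classical.arbitrary X))
  have itmono : ∀ n (W₁ W₂ : X → ℝ), (∀ z, W₁ z ≤ W₂ z) → ∀ z, H^[n] W₁ z ≤ H^[n] W₂ z := by
    intro n
    induction n with
    | zero => intro W₁ W₂ h z; simpa using h z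
    | succ n ih =>
      intro W₁ W₂ h z
      rw [Function.iterate_succ_apply', Function.iterate_succ_apply']
      exact hmono _ _ (ih W₁ W₂ h) z
  have ithom : ∀ n (cc : ℝ), 0 < cc → ∀ (W : X → ℝ),
      H^[n] (fun z => cc * W z) = fun z => cc * H^[n] W z := by
    intro n
    induction n with
    | zero => intro cc _ W; rfl
    | succ n ih =>
      intro cc hcc W
      rw [Function.iterate_succ_apply, hhom cc hcc W, ih cc hcc (H W),
        ← Function.iterate_succ_apply]
  rcases eq_or_lt_of_le hε0 with hε0' | hεpos
  · have hVVs : V = Vs := by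
      funext y
      have h := le_ciSup hbdd y
      rw [← hεdef, ← hε0'] at h
      have h2 : 0 ≤ |Vs y - V y| / Vp y := div_nonneg (abs_nonneg _) (hVp y).le
      have h3 : |Vs y - V y| / Vp y = 0 := le_antisymm h h2
      have h4 := (div_eq_zero_iff.mp h3).resolve_right (ne_of_gt (hVp y))
      have h5 := abs_eq_zero.mp h4
      linarith
    rw [← hε0']
    simp only [zero_mul, sub_zero]
    show V x ≤ T^[M] V x
    rw [hVVs, hfixM]
  · have key : ∀ z, γ ^ M * H^[M] (fun y => |V y - Vs y|) z ≤ ε * (β ^ M * Vp z) := by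
      intro z
      have hm : H^[M] (fun y => |V y - Vs y|) z ≤ H^[M] (fun y => ε * Vp y) z :=
        itmono M _ _ (fun y => by rw [abs_sub_comm]; exact hεub y) z
      have hh : H^[M] (fun y => ε * Vp y) z = ε * H^[M] Vp z := by
        rw [ithom M ε hεpos Vp]
      have hL := hLyap z
      nlinarith [mul_le_mul_of_nonneg_left hm hγM, mul_le_mul_of_nonneg_left hL hε0]
    have hTV : ∀ z, V z - ε * (1 + β ^ M) * Vp z ≤ T^[M] V z := by
      intro z
      have h1 := hcomp V Vs z
      rw [hfixM] at h1
      have h2 := (abs_le.mp (h1.trans (key z))).1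
      have h3 := (abs_le.mp (hεub z)).1
      nlinarith [hVp z]
    set c := ε * ((1 + β ^ M) / (1 - β ^ M)) with hcdef
    have hc : 0 ≤ c := by positivity
    have hsub' := hsub V c hc x
    have hL := hLyap x
    have hcid : c * (1 - β ^ M) = ε * (1 + β ^ M) := by
      rw [hcdef]; field_simp
    have hmul : c * (γ ^ M * H^[M] Vp x) ≤ c * (β ^ M * Vp x) :=
      mul_le_mul_of_nonneg_left hL hc
    nlinarith [hTV x, hVp x]
end
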